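/- (Corollary 1.) Assume Δ = 0, γ ≠ 4, α ≠ 0 and α ≠ 4. Let λ₁, λ₂ ∈ K and set s₁' := s₁ ∘ τ(λ₁·c₁) and s₂' := s₂ ∘ τ(λ₂·c₂). Then for every integer k ≥ 1 one has (s₁ ∘ s₂)^k = id_M if and only if (s₁' ∘ s₂')^k = id_M; in particular s₁ ∘ s₂ and s₁' ∘ s₂' have the same order. -/

import Mathlib

/-!
`s₁'` and `s₂'` are again reflections, with the same linear forms `φ₁, φ₂` as `s₁, s₂` but along
`a₁ + λ₁ b` and `a₂ + λ₂ b`: since `Δ = 0` the vector `b` lies in the kernels of `φ₁` and `φ₂`,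
and `τ(λ c₁)`, `τ(λ c₂)` are transvections `x ↦ x − λ φᵢ(x) b`. Consequently `T' := s₁'s₂'`
differs from `T := s₁s₂` by a rank-one map `x ↦ g(x) b` with `g` a combination of `φ₁, φ₂`,
and `T b = b`. If `T^k = 1`, then `T'^k x = x + g(∑_{i<k} Tⁱ x) b` and `∑_{i<k} Tⁱ x` is fixed
by `T`. A vector fixed by a product of two reflections along linearly independent vectors lies
in the kernels of both forms, hence in the kernel of `g`, so `T'^k = 1`; the argument is
symmetric in `T` and `T'`. Here `a₁, a₂, b` are independent because `m + 2 ≠ 0`, which follows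
from `Δ = 0`, `γ ≠ 4` and `α ≠ 4`.
-/

noncomputable section

variable {K : Type*} [Field K] [CharZero K]

/-- The linear functional `x ↦ c 0 * x 0 + c 1 * x 1 + c 2 * x 2` on `K³`. -/
def lf (c : Fin 3 → K) : (Fin 3 → K) →ₗ[K] K :=
  c 0 • LinearMap.proj 0 + c 1 • LinearMap.proj 1 + c 2 • LinearMap.proj 2

/-- `s₁ : x ↦ x − (2x₁ − α x₂ − β x₃)·a₁` where `a₁ = Pi.single 0 1`. -/
def s1 (α β : K) : Module.End K (Fin 3 → K) :=
  LinearMap.id - (lf ![2, -α, -β]).smulRight (Pi.single 0 1)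

/-- `s₂ : x ↦ x − (−x₁ + 2x₂ − l·x₃)·a₂`. -/
def s2 (l : K) : Module.End K (Fin 3 → K) :=
  LinearMap.id - (lf ![-1, 2, -l]).smulRight (Pi.single 1 1)

/-- `s₃ : x ↦ x − (−x₁ − m·x₂ + 2x₃)·a₃`. -/
def s3 (m : K) : Module.End K (Fin 3 → K) :=
  LinearMap.id - (lf ![-1, -m, 2]).smulRight (Pi.single 2 1)

/-- `b = b₁ = (4−γ)a₁ + (l+2)a₂ + (m+2)a₃`, with `γ = l·m`. -/
def bvec (l m : K) : Fin 3 → K := ![4 - l * m, l + 2, m + 2]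

/-- `b₂ = (2α+βm)a₁ + (4−β)a₂ + (α+2m)a₃`. -/
def b2vec (α β l m : K) : Fin 3 → K := ![2*α + β*m, 4 - β, α + 2*m]

/-- `b₃ = (2β+αl)a₁ + (β+2l)a₂ + (4−α)a₃`. -/
def b3vec (α β l m : K) : Fin 3 → K := ![2*β + α*l, β + 2*l, 4 - α]

/-- `τ(λ,μ) : a₁ ↦ a₁ + ω·b, a₂ ↦ a₂ + λ·b, a₃ ↦ a₃ + μ·b`,
where `ω = −(λ(l+2) + μ(m+2))/(4−γ)`. -/
def tau (l m lam mu : K) : Module.End K (Fin 3 → K) :=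
  LinearMap.id +
    (lf ![-(lam*(l+2) + mu*(m+2))/(4 - l*m), lam, mu]).smulRight (bvec l m)

/-- `τ` applied to a vector `(λ,μ) ∈ K²`. -/
def tauv (l m : K) (v : K × K) : Module.End K (Fin 3 → K) := tau l m v.1 v.2

def c1 (α β : K) : K × K := (α, β)
def c2 (l : K) : K × K := (-2, l)
def c3 (m : K) : K × K := (m, -2)

/-- `z₁ : a₁ ↦ −a₁ + (2/(4−γ))·b, a₂ ↦ −a₂, a₃ ↦ −a₃`. -/
def z1 (l m : K) : Module.End K (Fin 3 → K) :=
  -LinearMap.id + (lf ![2/(4 - l*m), 0, 0]).smulRight (bvec l m)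

/-- `z₂ : a₂ ↦ −a₂ + (2/(l+2))·b, a₁ ↦ −a₁, a₃ ↦ −a₃`. -/
def z2 (l m : K) : Module.End K (Fin 3 → K) :=
  -LinearMap.id + (lf ![0, 2/(l+2), 0]).smulRight (bvec l m)

/-- `z₃ : a₃ ↦ −a₃ + (2/(m+2))·b, a₁ ↦ −a₁, a₂ ↦ −a₂`. -/
def z3 (l m : K) : Module.End K (Fin 3 → K) :=
  -LinearMap.id + (lf ![0, 0, 2/(m+2)]).smulRight (bvec l m)

/-- The linear functional `(λ,μ) ↦ c.1·λ + c.2·μ` on `K²`. -/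
def lf2 (c : K × K) : (K × K) →ₗ[K] K := c.1 • LinearMap.fst K K K + c.2 • LinearMap.snd K K K

/-- `σ₁(λ,μ) = (λ,μ) − ((λ(l+2)+μ(m+2))/(4−γ))·(α,β)`. -/
def sigma1 (α β l m : K) : Module.End K (K × K) :=
  LinearMap.id - (lf2 ((l+2)/(4 - l*m), (m+2)/(4 - l*m))).smulRight (α, β)

/-- `σ₂(λ,μ) = (λ,μ) + λ·(−2,l)`. -/
def sigma2 (l : K) : Module.End K (K × K) :=
  LinearMap.id + (LinearMap.fst K K K).smulRight ((-2 : K), l)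

/-- `σ₃(λ,μ) = (λ,μ) + μ·(m,−2)`. -/
def sigma3 (m : K) : Module.End K (K × K) :=
  LinearMap.id + (LinearMap.snd K K K).smulRight (m, (-2 : K))

/-- The sequence `u_x` : `u_x(0)=0, u_x(1)=u_x(2)=1, u_x(3)=x−1,
u_x(n+4) = (x−2)·u_x(n+2) − u_x(n)`. -/
def useq (x : K) : ℕ → K
  | 0 => 0
  | 1 => 1
  | 2 => 1
  | 3 => x - 1
  | (n+4) => (x - 2) * useq x (n+2) - useq x n

open Module

section RankOnePerturbation

variable {R V : Type*} [CommRing R] [AddCommGroup V] [Module R V]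
  {T T' : End R V} {g : Dual R V} {b : V}

theorem pow_apply_of_eq_add_smulRight (hT : T' = T + g.smulRight b) (hb : T b = b)
    (hgb : g b = 0) (j : ℕ) (x : V) :
    (T' ^ j) x = (T ^ j) x + g ((∑ i ∈ Finset.range j, T ^ i) x) • b := by
  induction j with
  | zero => simp
  | succ n ih =>
    rw [pow_succ', Module.End.mul_apply, ih, hT, pow_succ', Finset.sum_range_succ]
    simp only [LinearMap.add_apply, LinearMap.smulRight_apply, map_add, map_smul, hb, hgb,
      zero_smul, add_zero, Module.End.mul_apply, add_smul]
    abel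

theorem pow_eq_one_of_eq_add_smulRight (hT : T' = T + g.smulRight b) (hb : T b = b)
    (hg : ∀ x, T x = x → g x = 0) {k : ℕ} (hk : T ^ k = 1) : T' ^ k = 1 := by
  ext x
  have hS : T ((∑ i ∈ Finset.range k, T ^ i) x) = (∑ i ∈ Finset.range k, T ^ i) x := by
    simpa [hk, sub_eq_zero] using congrArg (· x) (mul_geom_sum T k)
  rw [pow_apply_of_eq_add_smulRight hT hb (hg b hb), hk, hg _ hS, zero_smul, add_zero]

theorem pow_eq_one_iff_of_eq_add_smulRight (hT : T' = T + g.smulRight b) (hb : T b = b)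
    (hg : ∀ x, T x = x → g x = 0) (hg' : ∀ x, T' x = x → g x = 0) (k : ℕ) :
    T ^ k = 1 ↔ T' ^ k = 1 := by
  refine ⟨pow_eq_one_of_eq_add_smulRight hT hb hg,
    pow_eq_one_of_eq_add_smulRight (g := -g) (b := b) ?_ ?_ (fun x hx ↦ by simp [hg' x hx])⟩
  · ext x
    simp [hT]
  · rw [hT, LinearMap.add_apply, hb, LinearMap.smulRight_apply, hg b hb, zero_smul, add_zero]

end RankOnePerturbation

theorem LinearIndependent.pair_add_smul_of_triple {R V : Type*} [CommRing R] [AddCommGroup V]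
    [Module R V] {x y z : V} (h : LinearIndependent R ![x, y, z]) (p q : R) :
    LinearIndependent R ![x + p • z, y + q • z] := by
  rw [LinearIndependent.pair_iff]
  intro s t hst
  have := Fintype.linearIndependent_iff.1 h ![s, t, s * p + t * q]
    (by rw [Fin.sum_univ_three, ← hst]; simp only [Matrix.cons_val]; module)
  exact ⟨this 0, this 1⟩

section Reflection

variable {R V : Type*} [CommRing R] [AddCommGroup V] [Module R V]
  {u v b : V} {φ ψ : Dual R V}

theorem preReflection_mul_transvection (hφb : φ b = 0) (c : R) :
    preReflection u φ * (LinearMap.id + ((-c) • φ).smulRight b) = preReflection (u + c • b) φ := by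
  ext x
  simp only [Module.End.mul_apply, preReflection_apply, LinearMap.add_apply, LinearMap.id_apply,
    LinearMap.smulRight_apply, LinearMap.smul_apply, map_add, map_smul, hφb, smul_eq_mul]
  module

theorem preReflection_mul_preReflection_apply_of_ker (hφb : φ b = 0) (hψb : ψ b = 0) :
    (preReflection u φ * preReflection v ψ) b = b := by
  simp [preReflection_apply, hφb, hψb]

theorem preReflection_add_smul_mul_preReflection_add_smul (hφb : φ b = 0) (p q : R) :
    preReflection (u + p • b) φ * preReflection (v + q • b) ψ =
      preReflection u φ * preReflection v ψ + (-(q • ψ + p • (φ - φ v • ψ))).smulRight b := by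
  ext x
  simp only [Module.End.mul_apply, preReflection_apply, LinearMap.add_apply,
    LinearMap.smulRight_apply, LinearMap.neg_apply, LinearMap.sub_apply, LinearMap.smul_apply,
    map_add, map_sub, map_smul, hφb, smul_eq_mul]
  module

theorem apply_eq_zero_of_preReflection_mul_preReflection_apply_eq (hφu : φ u = 2)
    (huv : LinearIndependent R ![u, v]) {x : V} (hx : (preReflection u φ * preReflection v ψ) x = x) :
    φ x = 0 ∧ ψ x = 0 := by
  have hvu : preReflection v ψ x = preReflection u φ x := by
    rw [← involutive_preReflection hφu (preReflection v ψ x)]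
    exact congrArg _ hx
  rw [preReflection_apply, preReflection_apply] at hvu
  obtain ⟨h₁, h₂⟩ := LinearIndependent.pair_iff.1 huv (φ x) (-ψ x)
    (by rw [neg_smul, ← sub_eq_add_neg, ← sub_eq_zero.2 hvu]; abel)
  exact ⟨h₁, neg_eq_zero.1 h₂⟩

theorem pow_preReflection_mul_preReflection_eq_one_iff_add_smul (hφu : φ u = 2)
    (hφb : φ b = 0) (hψb : ψ b = 0) (huvb : LinearIndependent R ![u, v, b]) (p q : R) (k : ℕ) :
    (preReflection u φ * preReflection v ψ) ^ k = 1 ↔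
      (preReflection (u + p • b) φ * preReflection (v + q • b) ψ) ^ k = 1 := by
  have hker : ∀ x, φ x = 0 ∧ ψ x = 0 → (-(q • ψ + p • (φ - φ v • ψ))) x = 0 := by
    rintro x ⟨hφx, hψx⟩
    simp [hφx, hψx]
  refine pow_eq_one_iff_of_eq_add_smulRight
    (preReflection_add_smul_mul_preReflection_add_smul hφb p q)
    (preReflection_mul_preReflection_apply_of_ker hφb hψb)
    (fun x hx ↦ hker x ?_) (fun x hx ↦ hker x ?_) k
  · simpa using apply_eq_zero_of_preReflection_mul_preReflection_apply_eq hφu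
      (by simpa using huvb.pair_add_smul_of_triple 0 0) hx
  · exact apply_eq_zero_of_preReflection_mul_preReflection_apply_eq
      (by simp [hφu, hφb]) (huvb.pair_add_smul_of_triple p q) hx

end Reflection

section Concrete

variable {F : Type*} [Field F] {α β l m : F}

theorem lf_apply (c x : Fin 3 → F) : lf c x = c 0 * x 0 + c 1 * x 1 + c 2 * x 2 := by
  simp [lf]

theorem s1_eq_preReflection : s1 α β = preReflection (Pi.single 0 1) (lf ![2, -α, -β]) := rfl

theorem s2_eq_preReflection : s2 l = preReflection (Pi.single 1 1) (lf ![-1, 2, -l]) := rfl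

theorem lf_s1_bvec (hΔ : 8 - 2*α - 2*β - 2*(l*m) - (α*l + β*m) = 0) :
    lf ![2, -α, -β] (bvec l m) = 0 := by
  simp [lf_apply, bvec]
  linear_combination hΔ

theorem lf_s2_bvec : lf ![-1, 2, -l] (bvec l m) = 0 := by
  simp [lf_apply, bvec]
  ring

theorem tauv_smul_c1 (hΔ : 8 - 2*α - 2*β - 2*(l*m) - (α*l + β*m) = 0) (hγ : l*m ≠ 4) (lam : F) :
    tauv l m (lam • c1 α β) =
      LinearMap.id + ((-lam) • lf ![2, -α, -β]).smulRight (bvec l m) := by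
  have h4 : 4 - l*m ≠ 0 := sub_ne_zero.2 hγ.symm
  rw [tauv, tau]
  congr 2
  refine LinearMap.ext fun x ↦ ?_
  simp only [lf_apply, LinearMap.smul_apply, c1, Prod.smul_mk, smul_eq_mul, Matrix.cons_val]
  field_simp
  linear_combination lam * x 0 * hΔ

theorem tauv_smul_c2 (hγ : l*m ≠ 4) (lam : F) :
    tauv l m (lam • c2 l) = LinearMap.id + ((-lam) • lf ![-1, 2, -l]).smulRight (bvec l m) := by
  have h4 : 4 - l*m ≠ 0 := sub_ne_zero.2 hγ.symm
  rw [tauv, tau]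
  congr 2
  refine LinearMap.ext fun x ↦ ?_
  simp only [lf_apply, LinearMap.smul_apply, c2, Prod.smul_mk, smul_eq_mul, Matrix.cons_val]
  field_simp
  ring

theorem add_two_ne_zero_of_delta_eq_zero (hΔ : 8 - 2*α - 2*β - 2*(l*m) - (α*l + β*m) = 0)
    (hγ : l*m ≠ 4) (hα4 : α ≠ 4) : m + 2 ≠ 0 := by
  intro h
  obtain rfl : m = -2 := by linear_combination h
  have : (4 - α) * (l + 2) = 0 := by linear_combination hΔ
  rcases mul_eq_zero.1 this with h' | h'
  · exact hα4 (by linear_combination -h')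
  · exact hγ (by linear_combination (-2) * h')

theorem linearIndependent_single_single_bvec (hm : m + 2 ≠ 0) :
    LinearIndependent F ![Pi.single 0 1, Pi.single 1 1, bvec l m] := by
  rw [Fintype.linearIndependent_iff]
  intro c hc
  have h0 := congrFun hc 0
  have h1 := congrFun hc 1
  have h2 := congrFun hc 2
  simp [Fin.sum_univ_three, bvec] at h0 h1 h2
  have hc2 : c 2 = 0 := h2.resolve_right hm
  intro i
  fin_cases i
  · simpa [hc2] using h0
  · simpa [hc2] using h1
  · exact hc2

end Concrete

theorem stmt12_general (α β l m : K)
    (hΔ : 8 - 2*α - 2*β - 2*(l*m) - (α*l + β*m) = 0) (hγ : l*m ≠ 4)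
    (hα4 : α ≠ 4) (lam1 lam2 : K) :
    (∀ k : ℕ, 1 ≤ k →
      ((s1 α β * s2 l)^k = 1 ↔
        ((s1 α β * tauv l m (lam1 • c1 α β)) * (s2 l * tauv l m (lam2 • c2 l)))^k = 1)) ∧
    orderOf (s1 α β * s2 l)
      = orderOf ((s1 α β * tauv l m (lam1 • c1 α β)) * (s2 l * tauv l m (lam2 • c2 l))) := by
  rw [tauv_smul_c1 hΔ hγ, tauv_smul_c2 hγ, s1_eq_preReflection, s2_eq_preReflection,
    preReflection_mul_transvection (lf_s1_bvec hΔ), preReflection_mul_transvection lf_s2_bvec]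
  have key := pow_preReflection_mul_preReflection_eq_one_iff_add_smul (by simp [lf_apply])
    (lf_s1_bvec hΔ) lf_s2_bvec
    (linearIndependent_single_single_bvec (add_two_ne_zero_of_delta_eq_zero hΔ hγ hα4)) lam1 lam2
  exact ⟨fun k _ ↦ key k, orderOf_eq_orderOf_iff.2 key⟩

/-- Corollary 1: with `Δ = 0`, `γ ≠ 4`, `α ≠ 0`, `α ≠ 4`,
`s₁' = s₁ ∘ τ(λ₁c₁)`, `s₂' = s₂ ∘ τ(λ₂c₂)`: for every `k ≥ 1`,
`(s₁s₂)^k = 1 ↔ (s₁'s₂')^k = 1`; in particular `s₁s₂` and `s₁'s₂'` have the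
same order. -/
theorem stmt12 (α β l m : K)
    (hΔ : 8 - 2*α - 2*β - 2*(l*m) - (α*l + β*m) = 0) (hγ : l*m ≠ 4)
    (hα0 : α ≠ 0) (hα4 : α ≠ 4) (lam1 lam2 : K) :
    (∀ k : ℕ, 1 ≤ k →
      ((s1 α β * s2 l)^k = 1 ↔
        ((s1 α β * tauv l m (lam1 • c1 α β)) * (s2 l * tauv l m (lam2 • c2 l)))^k = 1)) ∧
    orderOf (s1 α β * s2 l)
      = orderOf ((s1 α β * tauv l m (lam1 • c1 α β)) * (s2 l * tauv l m (lam2 • c2 l))) :=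
  stmt12_general α β l m hΔ hγ hα4 lam1 lam2

end
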